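/- Let G be an m×m real generator matrix (G_{ij} ≥ 0 for i ≠ j and Σ_j G_{ij} = 0 for every i), ᾱ : {1,…,m} → ℝ with ᾱ(i) ≥ 0, A = diag(ᾱ), Q = G − A, and let π ∈ ℝ^m be a probability vector (π_i ≥ 0, Σ_i π_i = 1). Define y(t) = π ·ᵥ exp(t·Q), s(t) = Σ_i y_i(t), and x(t) = y(t)/s(t). Then for every t ≥ 0 the vector x(t) is a probability vector: x_i(t) ≥ 0 for every i and Σ_i x_i(t) = 1. (Well-posedness of the posterior flow in Proposition 1: the filtered distribution remains in the probability simplex between reaction times.) -/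

import Mathlib

open Matrix NormedSpace

lemma pow_entry_nonneg {m : ℕ} {B : Matrix (Fin m) (Fin m) ℝ}
    (hB : ∀ i j, 0 ≤ B i j) : ∀ (n : ℕ) (i j : Fin m), 0 ≤ (B ^ n) i j := by
  intro n
  induction n with
  | zero =>
    intro i j
    rw [pow_zero, Matrix.one_apply]
    split <;> norm_num
  | succ n ih =>
    intro i j
    rw [pow_succ, Matrix.mul_apply]
    exact Finset.sum_nonneg fun k _ => mul_nonneg (ih i k) (hB k j)

lemma exp_entry_hasSum {m : ℕ} (B : Matrix (Fin m) (Fin m) ℝ) (i j : Fin m) :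
    HasSum (fun n : ℕ => ((n.factorial⁻¹ : ℝ) • B ^ n) i j) (exp B i j) := by
  letI : SeminormedRing (Matrix (Fin m) (Fin m) ℝ) := Matrix.linftyOpSemiNormedRing
  letI : NormedRing (Matrix (Fin m) (Fin m) ℝ) := Matrix.linftyOpNormedRing
  letI : NormedAlgebra ℝ (Matrix (Fin m) (Fin m) ℝ) := Matrix.linftyOpNormedAlgebra
  have h : HasSum (fun n : ℕ => (n.factorial⁻¹ : ℝ) • B ^ n) (exp B) := by
    have := (NormedSpace.expSeries_summable' (𝕂 := ℝ) B).hasSum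
    rw [NormedSpace.exp_eq_tsum ℝ]
    exact this
  let L : Matrix (Fin m) (Fin m) ℝ →ₗ[ℝ] ℝ :=
    Matrix.entryLinearMap ℝ ℝ i j
  exact h.mapL (LinearMap.toContinuousLinearMap L)

lemma exp_entry_nonneg {m : ℕ} {B : Matrix (Fin m) (Fin m) ℝ}
    (hB : ∀ i j, 0 ≤ B i j) (i j : Fin m) : 0 ≤ exp B i j :=
  (exp_entry_hasSum B i j).nonneg fun n => by
    have : ((n.factorial⁻¹ : ℝ) • B ^ n) i j = (n.factorial⁻¹ : ℝ) * (B ^ n) i j := rfl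
    rw [this]
    exact mul_nonneg (by positivity) (pow_entry_nonneg hB n i j)

lemma one_le_exp_entry_diag {m : ℕ} {B : Matrix (Fin m) (Fin m) ℝ}
    (hB : ∀ i j, 0 ≤ B i j) (i : Fin m) : 1 ≤ exp B i i := by
  have h := exp_entry_hasSum B i i
  have h0 : ((Nat.factorial 0)⁻¹ : ℝ) • (B ^ 0) i i ≤ exp B i i := by
    have := le_hasSum h 0 (fun n _ => by
      have : ((n.factorial⁻¹ : ℝ) • B ^ n) i i = (n.factorial⁻¹ : ℝ) * (B ^ n) i i := rfl
      rw [this]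
      exact mul_nonneg (by positivity) (pow_entry_nonneg hB n i i))
    exact this
  simpa [Matrix.one_apply] using h0

lemma exp_smul_one_matrix {m : ℕ} (r : ℝ) :
    exp (r • (1 : Matrix (Fin m) (Fin m) ℝ)) = Real.exp r • (1 : Matrix (Fin m) (Fin m) ℝ) := by
  letI : SeminormedRing (Matrix (Fin m) (Fin m) ℝ) := Matrix.linftyOpSemiNormedRing
  letI : NormedRing (Matrix (Fin m) (Fin m) ℝ) := Matrix.linftyOpNormedRing
  letI : NormedAlgebra ℝ (Matrix (Fin m) (Fin m) ℝ) := Matrix.linftyOpNormedAlgebra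
  have h := NormedSpace.algebraMap_exp_comm (𝕂 := ℝ) (𝔸 := Matrix (Fin m) (Fin m) ℝ) r
  rw [Algebra.algebraMap_eq_smul_one, Algebra.algebraMap_eq_smul_one] at h
  rw [Real.exp_eq_exp_ℝ]
  exact h.symm

/-- The normalized flow `x(t) = (π ·ᵥ exp(t·(G − diag ᾱ))) / s(t)` stays in the
probability simplex for all `t ≥ 0`. -/
theorem posterior_flow_probability (m : ℕ) (hm : 1 ≤ m)
    (G : Matrix (Fin m) (Fin m) ℝ) (hGoff : ∀ i j, i ≠ j → 0 ≤ G i j)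
    (hGrow : ∀ i, (∑ j, G i j) = 0)
    (α : Fin m → ℝ) (hα : ∀ i, 0 ≤ α i)
    (π : Fin m → ℝ) (hπ : ∀ i, 0 ≤ π i) (hπsum : (∑ i, π i) = 1) :
    let Q := G - Matrix.diagonal α
    let y : ℝ → Fin m → ℝ := fun t => π ᵥ* NormedSpace.exp (t • Q)
    let s : ℝ → ℝ := fun t => ∑ i, y t i
    let x : ℝ → Fin m → ℝ := fun t i => y t i / s t
    ∀ t : ℝ, 0 ≤ t → (∀ i, 0 ≤ x t i) ∧ (∑ i, x t i) = 1 := by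
  intro Q y s x t ht
  haveI : NeZero m := ⟨by omega⟩
  -- choose a shift `c` making `B := Q + c • 1` entrywise nonnegative
  set c : ℝ := Finset.univ.sup' (Finset.univ_nonempty) (fun i => α i - G i i) with hc
  set B : Matrix (Fin m) (Fin m) ℝ := Q + c • (1 : Matrix (Fin m) (Fin m) ℝ) with hBdef
  have hB : ∀ i j, 0 ≤ B i j := by
    intro i j
    by_cases hij : i = j
    · subst hij
      have hle : α i - G i i ≤ c := by
        rw [hc]; exact Finset.le_sup' (fun i => α i - G i i) (Finset.mem_univ i)
      have : B i i = G i i - α i + c := by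
        simp [hBdef, Q, Matrix.sub_apply, Matrix.diagonal_apply_eq, Matrix.smul_apply,
          Matrix.one_apply_eq, smul_eq_mul]
      rw [this]; linarith
    · have : B i j = G i j := by
        simp [hBdef, Q, Matrix.sub_apply, Matrix.diagonal_apply_ne _ hij,
          Matrix.smul_apply, Matrix.one_apply_ne hij, smul_eq_mul]
      rw [this]; exact hGoff i j hij
  have htB : ∀ i j, 0 ≤ (t • B) i j := fun i j =>
    mul_nonneg ht (hB i j)
  -- exp(t•B) = Real.exp (t*c) • exp(t•Q)
  set r : ℝ := Real.exp (t * c) with hr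
  have hrpos : 0 < r := Real.exp_pos _
  have hsplit : t • B = t • Q + (t * c) • (1 : Matrix (Fin m) (Fin m) ℝ) := by
    rw [hBdef, smul_add, smul_smul]
  have hkey : exp (t • B) = r • exp (t • Q) := by
    rw [hsplit, Matrix.exp_add_of_commute _ _
        ((Commute.one_right (t • Q)).smul_right (t * c)),
      exp_smul_one_matrix, Matrix.mul_smul, mul_one, hr]
  -- entrywise consequences
  have hentry : ∀ i j, exp (t • Q) i j = exp (t • B) i j / r := by
    intro i j
    have : exp (t • B) i j = r * exp (t • Q) i j := by
      rw [hkey]; rfl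
    rw [this]; field_simp
  have hnonnegE : ∀ i j, 0 ≤ exp (t • Q) i j := by
    intro i j
    rw [hentry i j]
    exact div_nonneg (exp_entry_nonneg htB i j) hrpos.le
  have hdiagE : ∀ i, r⁻¹ ≤ exp (t • Q) i i := by
    intro i
    rw [hentry i i, div_eq_mul_inv]
    nth_rewrite 1 [← one_mul r⁻¹]
    exact mul_le_mul_of_nonneg_right (one_le_exp_entry_diag htB i) (by positivity)
  -- y t i = ∑ j, π j * exp(t•Q) j i
  have hy : ∀ i, y t i = ∑ j, π j * exp (t • Q) j i := by
    intro i
    simp [y, Matrix.vecMul, dotProduct]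
  have hynn : ∀ i, 0 ≤ y t i := by
    intro i
    rw [hy i]
    exact Finset.sum_nonneg fun j _ => mul_nonneg (hπ j) (hnonnegE j i)
  have hylb : ∀ i, π i * r⁻¹ ≤ y t i := by
    intro i
    rw [hy i]
    calc π i * r⁻¹ ≤ π i * exp (t • Q) i i :=
          mul_le_mul_of_nonneg_left (hdiagE i) (hπ i)
      _ ≤ ∑ j, π j * exp (t • Q) j i :=
          Finset.single_le_sum (fun j _ => mul_nonneg (hπ j) (hnonnegE j i))
            (Finset.mem_univ i)
  have hs : r⁻¹ ≤ s t := by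
    have : ∑ i, π i * r⁻¹ ≤ ∑ i, y t i :=
      Finset.sum_le_sum fun i _ => hylb i
    rwa [← Finset.sum_mul, hπsum, one_mul] at this
  have hspos : 0 < s t := lt_of_lt_of_le (by positivity) hs
  refine ⟨fun i => div_nonneg (hynn i) hspos.le, ?_⟩
  show (∑ i, y t i / s t) = 1
  rw [← Finset.sum_div]
  exact div_self hspos.ne'
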